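/- Let φ : R → Q be an injective ring epimorphism with Tor_1^R(Q, Q) = 0 and K = Q/φ(R). Then for every right R-module M, the right R-module Hom_R(K, M) is both Matlis-cotorsion and h-reduced, i.e., Ext^1_R(Q, Hom_R(K, M)) = 0 and Hom_R(Q, Hom_R(K, M)) = 0. -/

import Mathlib

open MulOpposite

universe u

/-- `φ : R →+* Q` is an epimorphism in the category of rings. -/
def IsRingEpi {R Q : Type u} [Ring R] [Ring Q] (φ : R →+* Q) : Prop :=
  ∀ (T : Type u) [Ring T] (ψ ω : Q →+* T), ψ.comp φ = ω.comp φ → ψ = ω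

section NCTensor

variable (R : Type u) [Ring R] (M : Type u) [AddCommGroup M] [Module Rᵐᵒᵖ M]
  (N : Type u) [AddCommGroup N] [Module R N]

/-- Relations defining the tensor product `M ⊗_R N` of a right `R`-module `M`
and a left `R`-module `N` over a (possibly noncommutative) ring `R`. -/
def ncRels : AddSubgroup (FreeAbelianGroup (M × N)) :=
  AddSubgroup.closure
    ({x | ∃ m m' n, x = FreeAbelianGroup.of (m + m', n) - FreeAbelianGroup.of (m, n) -
        FreeAbelianGroup.of (m', n)} ∪
     {x | ∃ m n n', x = FreeAbelianGroup.of (m, n + n') - FreeAbelianGroup.of (m, n) -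
        FreeAbelianGroup.of (m, n')} ∪
     {x | ∃ (r : R) (m : M) (n : N), x = FreeAbelianGroup.of (op r • m, n) -
        FreeAbelianGroup.of (m, r • n)})

/-- The tensor product `M ⊗_R N` of a right `R`-module and a left `R`-module over a
(possibly noncommutative) ring `R`, as an abelian group. -/
def NCTensor : Type u := FreeAbelianGroup (M × N) ⧸ ncRels R M N

instance : AddCommGroup (NCTensor R M N) :=
  QuotientAddGroup.Quotient.addCommGroup _

/-- The pure tensor `m ⊗ n` in `M ⊗_R N`. -/
def NCTensor.tmul (m : M) (n : N) : NCTensor R M N :=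
  QuotientAddGroup.mk (FreeAbelianGroup.of (m, n))

end NCTensor

/-- `Tor_1^R(X, N) = 0`, for a right `R`-module `X` and a left `R`-module `N`:
for every presentation `0 → A → B → X → 0` of `X` with `B` projective, the induced map
`A ⊗_R N → B ⊗_R N` is injective. -/
def Tor1Zero (R : Type u) [Ring R] (X : Type u) [AddCommGroup X] [Module Rᵐᵒᵖ X]
    (N : Type u) [AddCommGroup N] [Module R N] : Prop :=
  ∀ (A B : Type u) [AddCommGroup A] [AddCommGroup B] [Module Rᵐᵒᵖ A] [Module Rᵐᵒᵖ B]
    (i : A →ₗ[Rᵐᵒᵖ] B) (p : B →ₗ[Rᵐᵒᵖ] X),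
    Module.Projective Rᵐᵒᵖ B → Function.Injective i → Function.Surjective p →
    LinearMap.range i = LinearMap.ker p →
    ∀ g : NCTensor R A N →+ NCTensor R B N,
      (∀ a n, g (NCTensor.tmul R A N a n) = NCTensor.tmul R B N (i a) n) →
      Function.Injective g

open CategoryTheory in
/-- The Ext group `Ext^n_A(M, N)` for modules over an arbitrary ring `A`,
computed in the abelian category of `A`-modules. -/
noncomputable abbrev extGroup (A : Type u) [Ring A] (n : ℕ) (M : Type u) [AddCommGroup M]
    [Module A M] (N : Type u) [AddCommGroup N] [Module A N] : Type u :=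
  ((Ext ℤ (ModuleCat.{u} A) n).obj (Opposite.op (ModuleCat.of A M))).obj (ModuleCat.of A N)

section Kmod

variable {R Q : Type u} [Ring R] [Ring Q] (φ : R →+* Q) [Module Rᵐᵒᵖ Q]
  (hr : ∀ (r : R) (q : Q), op r • q = q * φ r)

/-- The image of `φ`, as a submodule of the right `R`-module `Q`. -/
def phiRange : Submodule Rᵐᵒᵖ Q where
  carrier := Set.range φ
  add_mem' := by rintro x y ⟨a, rfl⟩ ⟨b, rfl⟩; exact ⟨a + b, map_add φ a b⟩
  zero_mem' := ⟨0, map_zero φ⟩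
  smul_mem' := by
    rintro c x ⟨a, rfl⟩
    refine ⟨a * c.unop, ?_⟩
    rw [map_mul]
    conv_rhs => rw [← MulOpposite.op_unop c, hr]

/-- `K = Q/φ(R)` as a right `R`-module. -/
abbrev Kmod := Q ⧸ phiRange φ hr

end Kmod

section Kleft

variable {R Q : Type u} [Ring R] [Ring Q] (φ : R →+* Q) [Module Rᵐᵒᵖ Q]
  (hr : ∀ (r : R) (q : Q), op r • q = q * φ r)

/-- Left multiplication by `φ r` on `Q`, as an endomorphism of the right `R`-module `Q`. -/
def lmulQ (r : R) : Q →ₗ[Rᵐᵒᵖ] Q where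
  toFun q := φ r * q
  map_add' := mul_add _
  map_smul' := by
    intro c q
    simp only [RingHom.id_apply]
    conv_lhs => rw [← MulOpposite.op_unop c, hr]
    conv_rhs => rw [← MulOpposite.op_unop c, hr]
    rw [mul_assoc]

/-- Left multiplication by `φ r` on `K = Q/φ(R)`. -/
def lK (r : R) : Kmod φ hr →ₗ[Rᵐᵒᵖ] Kmod φ hr :=
  Submodule.mapQ _ _ (lmulQ φ hr r) (by
    rintro x ⟨a, rfl⟩
    exact ⟨r * a, by simp [lmulQ, map_mul]⟩)

/-- The left `R`-module structure on `K = Q/φ(R)` induced by left multiplication. -/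
def KleftModule : Module R (Kmod φ hr) :=
  letI : SMul R (Kmod φ hr) := ⟨fun r k => lK φ hr r k⟩
  Module.ofMinimalAxioms
    (fun r x y => map_add (lK φ hr r) x y)
    (fun r s x => by
      obtain ⟨q, rfl⟩ := Submodule.Quotient.mk_surjective _ x
      show lK φ hr (r + s) (Submodule.Quotient.mk q) = _
      simp only [lK, Submodule.mapQ_apply, lmulQ, LinearMap.coe_mk, AddHom.coe_mk, map_add,
        add_mul]
      rfl)
    (fun r s x => by
      obtain ⟨q, rfl⟩ := Submodule.Quotient.mk_surjective _ x
      show lK φ hr (r * s) (Submodule.Quotient.mk q) = lK φ hr r (lK φ hr s _)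
      simp only [lK, Submodule.mapQ_apply, lmulQ, LinearMap.coe_mk, AddHom.coe_mk, map_mul,
        mul_assoc])
    (fun x => by
      obtain ⟨q, rfl⟩ := Submodule.Quotient.mk_surjective _ x
      show lK φ hr 1 (Submodule.Quotient.mk q) = _
      simp [lK, Submodule.mapQ_apply, lmulQ])

end Kleft

section HomMod

variable {R Q : Type u} [Ring R] [Ring Q] (φ : R →+* Q) [Module Rᵐᵒᵖ Q]
  (hr : ∀ (r : R) (q : Q), op r • q = q * φ r)
  (M : Type u) [AddCommGroup M] [Module Rᵐᵒᵖ M]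

/-- The right `R`-module structure on `Hom_R(K, M)` coming from the left action of `R` on `K`. -/
def homModule : Module Rᵐᵒᵖ (Kmod φ hr →ₗ[Rᵐᵒᵖ] M) :=
  letI : SMul Rᵐᵒᵖ (Kmod φ hr →ₗ[Rᵐᵒᵖ] M) := ⟨fun c f => f.comp (lK φ hr c.unop)⟩
  Module.ofMinimalAxioms
    (fun c f g => by
      refine LinearMap.ext fun k => ?_
      rfl)
    (fun c d f => by
      show f.comp (lK φ hr (c + d).unop) = f.comp (lK φ hr c.unop) + f.comp (lK φ hr d.unop)
      refine LinearMap.ext fun k => ?_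
      obtain ⟨q, rfl⟩ := Submodule.Quotient.mk_surjective _ k
      simp [lK, Submodule.mapQ_apply, lmulQ, MulOpposite.unop_add, map_add, add_mul])
    (fun c d f => by
      show f.comp (lK φ hr (c * d).unop) = (f.comp (lK φ hr d.unop)).comp (lK φ hr c.unop)
      refine LinearMap.ext fun k => ?_
      obtain ⟨q, rfl⟩ := Submodule.Quotient.mk_surjective _ k
      simp [lK, Submodule.mapQ_apply, lmulQ, map_mul, mul_assoc])
    (fun f => by
      show f.comp (lK φ hr (1 : Rᵐᵒᵖ).unop) = f
      refine LinearMap.ext fun k => ?_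
      obtain ⟨q, rfl⟩ := Submodule.Quotient.mk_surjective _ k
      simp [lK, Submodule.mapQ_apply, lmulQ])

end HomMod

/-!
As `φ` is an epimorphism, the ring maps `a ↦ (a, 0)` and `a ↦ (a, a ⊗ 1 - 1 ⊗ a)` from `Q` to
the square-zero extension `Q ⋉ (Q ⊗_R Q)` agree on `φ(R)`, hence `q ⊗ 1 = 1 ⊗ q` in `Q ⊗_R Q`.
So `Q ⊗_R Q = Q` and `Q ⊗_R K = 0`, and with `Tor_1^R(Q, Q) = 0` the sequence
`0 → R → Q → K → 0` gives `Tor_1^R(Q, K) = 0`. Maps `X → Hom_R(K, M)` are maps `X ⊗_R K → M`;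
thus `Hom_R(Q, Hom_R(K, M)) = 0`, and for a projective presentation `0 → A → B → Q → 0` the map
`A ⊗_R K → B ⊗_R K` is injective (`Tor_1`) and surjective (its cokernel is `Q ⊗_R K`), so maps
`A → Hom_R(K, M)` extend to `B`, i.e. `Ext^1_R(Q, Hom_R(K, M)) = 0`.
-/

notation:100 m:100 " ⊗ₙ[" R "] " n:101 => NCTensor.tmul R _ _ m n

namespace NCTensor

section Basic

variable {R : Type u} [Ring R] {M : Type u} [AddCommGroup M] [Module Rᵐᵒᵖ M]
  {N : Type u} [AddCommGroup N] [Module R N]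

private lemma mk_eq_mk {a b : FreeAbelianGroup (M × N)} (h : a - b ∈ ncRels R M N) :
    (QuotientAddGroup.mk a : NCTensor R M N) = QuotientAddGroup.mk b :=
  QuotientAddGroup.eq_iff_sub_mem.mpr h

lemma add_tmul (m m' : M) (n : N) : (m + m') ⊗ₙ[R] n = m ⊗ₙ[R] n + m' ⊗ₙ[R] n := by
  refine mk_eq_mk (AddSubgroup.subset_closure (.inl (.inl ⟨m, m', n, ?_⟩)))
  exact (sub_sub _ _ _).symm

lemma tmul_add (m : M) (n n' : N) : m ⊗ₙ[R] (n + n') = m ⊗ₙ[R] n + m ⊗ₙ[R] n' := by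
  refine mk_eq_mk (AddSubgroup.subset_closure (.inl (.inr ⟨m, n, n', ?_⟩)))
  exact (sub_sub _ _ _).symm

lemma smul_tmul (r : R) (m : M) (n : N) : (op r • m) ⊗ₙ[R] n = m ⊗ₙ[R] (r • n) :=
  mk_eq_mk (AddSubgroup.subset_closure (.inr ⟨r, m, n, rfl⟩))

@[simp]
lemma zero_tmul (n : N) : (0 : M) ⊗ₙ[R] n = 0 := by
  simpa using add_tmul (R := R) (0 : M) 0 n

@[simp]
lemma tmul_zero (m : M) : m ⊗ₙ[R] (0 : N) = 0 := by
  simpa using tmul_add (R := R) m (0 : N) 0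

lemma neg_tmul (m : M) (n : N) : (-m) ⊗ₙ[R] n = -(m ⊗ₙ[R] n) := by
  rw [eq_neg_iff_add_eq_zero, ← add_tmul, neg_add_cancel, zero_tmul]

lemma tmul_neg (m : M) (n : N) : m ⊗ₙ[R] (-n) = -(m ⊗ₙ[R] n) := by
  rw [eq_neg_iff_add_eq_zero, ← tmul_add, neg_add_cancel, tmul_zero]

lemma sub_tmul (m m' : M) (n : N) : (m - m') ⊗ₙ[R] n = m ⊗ₙ[R] n - m' ⊗ₙ[R] n := by
  rw [sub_eq_add_neg, sub_eq_add_neg, add_tmul, neg_tmul]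

lemma tmul_sub (m : M) (n n' : N) : m ⊗ₙ[R] (n - n') = m ⊗ₙ[R] n - m ⊗ₙ[R] n' := by
  rw [sub_eq_add_neg, sub_eq_add_neg, tmul_add, tmul_neg]

def lift {A : Type*} [AddCommGroup A] (b : M → N → A)
    (hb₁ : ∀ m m' n, b (m + m') n = b m n + b m' n)
    (hb₂ : ∀ m n n', b m (n + n') = b m n + b m n')
    (hbr : ∀ (r : R) m n, b (op r • m) n = b m (r • n)) :
    NCTensor R M N →+ A :=
  QuotientAddGroup.lift _ (FreeAbelianGroup.lift fun p => b p.1 p.2) (by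
    rw [ncRels, AddSubgroup.closure_le]
    rintro x ((⟨m, m', n, rfl⟩ | ⟨m, n, n', rfl⟩) | ⟨r, m, n, rfl⟩) <;>
      simp [FreeAbelianGroup.lift_apply_of, hb₁, hb₂, hbr])

@[simp]
lemma lift_tmul {A : Type*} [AddCommGroup A] (b : M → N → A) (hb₁ hb₂ hbr) (m : M) (n : N) :
    lift b hb₁ hb₂ hbr (m ⊗ₙ[R] n) = b m n :=
  FreeAbelianGroup.lift_apply_of _ _

@[elab_as_elim]
lemma induction_on {motive : NCTensor R M N → Prop} (x : NCTensor R M N) (zero : motive 0)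
    (tmul : ∀ m n, motive (m ⊗ₙ[R] n)) (add : ∀ y z, motive y → motive z → motive (y + z)) :
    motive x := by
  obtain ⟨a, rfl⟩ := QuotientAddGroup.mk_surjective x
  induction a using FreeAbelianGroup.induction_on with
  | zero => exact zero
  | of p => exact tmul p.1 p.2
  | neg p _ =>
    change motive (-(p.1 ⊗ₙ[R] p.2))
    rw [← neg_tmul]
    exact tmul _ _
  | add a b ha hb => exact add _ _ ha hb

@[ext]
lemma addMonoidHom_ext {A : Type*} [AddCommGroup A] {f g : NCTensor R M N →+ A}
    (h : ∀ m n, f (m ⊗ₙ[R] n) = g (m ⊗ₙ[R] n)) : f = g :=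
  AddMonoidHom.ext fun x => x.induction_on (by simp only [map_zero]) h
    (fun y z hy hz => by simp only [map_add, hy, hz])

lemma exists_eq_tmul_one (x : NCTensor R M R) : ∃ m : M, x = m ⊗ₙ[R] (1 : R) := by
  induction x using induction_on with
  | zero => exact ⟨0, (zero_tmul 1).symm⟩
  | tmul m r => exact ⟨op r • m, by rw [smul_tmul, smul_eq_mul, mul_one]⟩
  | add y z hy hz =>
    obtain ⟨m, rfl⟩ := hy
    obtain ⟨m', rfl⟩ := hz
    exact ⟨m + m', (add_tmul m m' 1).symm⟩

end Basic

section Functoriality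

variable {R : Type u} [Ring R] {M M' M'' : Type u} [AddCommGroup M] [AddCommGroup M']
  [AddCommGroup M''] [Module Rᵐᵒᵖ M] [Module Rᵐᵒᵖ M'] [Module Rᵐᵒᵖ M'']
  {N N' N'' : Type u} [AddCommGroup N] [AddCommGroup N'] [AddCommGroup N'']
  [Module R N] [Module R N'] [Module R N'']

variable (N) in
def rTensor (f : M →ₗ[Rᵐᵒᵖ] M') : NCTensor R M N →+ NCTensor R M' N :=
  lift (fun m n => f m ⊗ₙ[R] n) (by simp [add_tmul]) (by simp [tmul_add]) (by simp [smul_tmul])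

variable (M) in
def lTensor (g : N →ₗ[R] N') : NCTensor R M N →+ NCTensor R M N' :=
  lift (fun m n => m ⊗ₙ[R] g n) (by simp [add_tmul]) (by simp [tmul_add]) (by simp [smul_tmul])

@[simp]
lemma rTensor_tmul (f : M →ₗ[Rᵐᵒᵖ] M') (m : M) (n : N) :
    rTensor N f (m ⊗ₙ[R] n) = f m ⊗ₙ[R] n :=
  lift_tmul ..

@[simp]
lemma lTensor_tmul (g : N →ₗ[R] N') (m : M) (n : N) :
    lTensor M g (m ⊗ₙ[R] n) = m ⊗ₙ[R] g n :=
  lift_tmul ..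

lemma rTensor_lTensor (f : M →ₗ[Rᵐᵒᵖ] M') (g : N →ₗ[R] N') (x : NCTensor R M N) :
    rTensor N' f (lTensor M g x) = lTensor M' g (rTensor N f x) := by
  change ((rTensor N' f).comp (lTensor M g)) x = ((lTensor M' g).comp (rTensor N f)) x
  congr 1
  ext; simp

variable (M) in
lemma lTensor_surjective {g : N →ₗ[R] N'} (hg : Function.Surjective g) :
    Function.Surjective (lTensor M g) := by
  intro x
  induction x using induction_on with
  | zero => exact ⟨0, map_zero _⟩
  | tmul m n =>
    obtain ⟨n, rfl⟩ := hg n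
    exact ⟨m ⊗ₙ[R] n, lTensor_tmul ..⟩
  | add y z hy hz =>
    obtain ⟨y, rfl⟩ := hy
    obtain ⟨z, rfl⟩ := hz
    exact ⟨y + z, map_add ..⟩

variable (N) in
lemma rTensor_exact {f : M' →ₗ[Rᵐᵒᵖ] M} {g : M →ₗ[Rᵐᵒᵖ] M''} (hfg : Function.Exact f g)
    (hg : Function.Surjective g) : Function.Exact (rTensor N f) (rTensor N g) := by
  intro y
  constructor
  · intro hy
    -- Via a section of `g`, the projection `M ⊗ N → (M ⊗ N) / im (f ⊗ N)` factors through `g ⊗ N`.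
    let G := (rTensor N f).range
    have hmk : ∀ m₁ m₂ (n : N), g m₁ = g m₂ →
        (QuotientAddGroup.mk (m₁ ⊗ₙ[R] n) : _ ⧸ G) = QuotientAddGroup.mk (m₂ ⊗ₙ[R] n) := by
      intro m₁ m₂ n h
      obtain ⟨w, hw⟩ := (hfg (m₂ - m₁)).mp (by rw [map_sub, h, sub_self])
      exact QuotientAddGroup.eq.mpr ⟨w ⊗ₙ[R] n, by rw [rTensor_tmul, hw, sub_tmul, neg_add_eq_sub]⟩
    let σ := Function.surjInv hg
    let ψ : NCTensor R M'' N →+ _ ⧸ G := lift (fun m n => QuotientAddGroup.mk (σ m ⊗ₙ[R] n))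
      (fun m m' n => by
        rw [← QuotientAddGroup.mk_add, ← add_tmul]
        exact hmk _ _ _ (by simp only [map_add, σ, Function.surjInv_eq]))
      (fun m n n' => by rw [tmul_add, QuotientAddGroup.mk_add])
      (fun r m n => by
        rw [← smul_tmul]
        exact hmk _ _ _ (by simp only [map_smul, σ, Function.surjInv_eq]))
    have hψ : ψ.comp (rTensor N g) = QuotientAddGroup.mk' G := by
      ext m n
      exact hmk _ _ _ (Function.surjInv_eq hg _)
    have hy' : (QuotientAddGroup.mk y : _ ⧸ G) = 0 := by
      rw [← QuotientAddGroup.mk'_apply, ← hψ, AddMonoidHom.comp_apply, hy, map_zero]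
    exact (QuotientAddGroup.eq_zero_iff y).mp hy'
  · rintro ⟨x, rfl⟩
    change ((rTensor N g).comp (rTensor N f)) x = 0
    exact DFunLike.congr_fun (addMonoidHom_ext (g := 0) fun m n => by
      simp [hfg.apply_apply_eq_zero]) x

variable (M) in
lemma lTensor_exact {f : N' →ₗ[R] N} {g : N →ₗ[R] N''} (hfg : Function.Exact f g)
    (hg : Function.Surjective g) : Function.Exact (lTensor M f) (lTensor M g) := by
  intro y
  constructor
  · intro hy
    let G := (lTensor M f).range
    have hmk : ∀ (m : M) n₁ n₂, g n₁ = g n₂ →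
        (QuotientAddGroup.mk (m ⊗ₙ[R] n₁) : _ ⧸ G) = QuotientAddGroup.mk (m ⊗ₙ[R] n₂) := by
      intro m n₁ n₂ h
      obtain ⟨w, hw⟩ := (hfg (n₂ - n₁)).mp (by rw [map_sub, h, sub_self])
      exact QuotientAddGroup.eq.mpr ⟨m ⊗ₙ[R] w, by rw [lTensor_tmul, hw, tmul_sub, neg_add_eq_sub]⟩
    let σ := Function.surjInv hg
    let ψ : NCTensor R M N'' →+ _ ⧸ G := lift (fun m n => QuotientAddGroup.mk (m ⊗ₙ[R] σ n))
      (fun m m' n => by rw [add_tmul, QuotientAddGroup.mk_add])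
      (fun m n n' => by
        rw [← QuotientAddGroup.mk_add, ← tmul_add]
        exact hmk _ _ _ (by simp only [map_add, σ, Function.surjInv_eq]))
      (fun r m n => by
        rw [smul_tmul]
        exact hmk _ _ _ (by simp only [map_smul, σ, Function.surjInv_eq]))
    have hψ : ψ.comp (lTensor M g) = QuotientAddGroup.mk' G := by
      ext m n
      exact hmk _ _ _ (Function.surjInv_eq hg _)
    have hy' : (QuotientAddGroup.mk y : _ ⧸ G) = 0 := by
      rw [← QuotientAddGroup.mk'_apply, ← hψ, AddMonoidHom.comp_apply, hy, map_zero]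
    exact (QuotientAddGroup.eq_zero_iff y).mp hy'
  · rintro ⟨x, rfl⟩
    change ((lTensor M g).comp (lTensor M f)) x = 0
    exact DFunLike.congr_fun (addMonoidHom_ext (g := 0) fun m n => by
      simp [hfg.apply_apply_eq_zero]) x

end Functoriality

section LeftMul

variable {R Q : Type u} [Ring R] [Ring Q] (φ : R →+* Q)
  [Module Rᵐᵒᵖ Q] (hr : ∀ (r : R) (q : Q), op r • q = q * φ r)
  (N : Type u) [AddCommGroup N] [Module R N]

def lmul (a : Q) : NCTensor R Q N →+ NCTensor R Q N :=
  lift (fun x n => (a * x) ⊗ₙ[R] n) (by simp [mul_add, add_tmul]) (by simp [tmul_add])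
    (fun r x n => by rw [hr, ← mul_assoc, ← hr, smul_tmul])

@[simp]
lemma lmul_tmul (a x : Q) (n : N) : lmul φ hr N a (x ⊗ₙ[R] n) = (a * x) ⊗ₙ[R] n :=
  lift_tmul ..

abbrev leftModule : Module Q (NCTensor R Q N) :=
  letI : SMul Q (NCTensor R Q N) := ⟨fun a z => lmul φ hr N a z⟩
  Module.ofMinimalAxioms (fun a => map_add (lmul φ hr N a))
    (fun a b => DFunLike.congr_fun (addMonoidHom_ext (f := lmul φ hr N (a + b))
      (g := lmul φ hr N a + lmul φ hr N b) fun x n => by simp [add_mul, add_tmul]))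
    (fun a b => DFunLike.congr_fun (addMonoidHom_ext (f := lmul φ hr N (a * b))
      (g := (lmul φ hr N a).comp (lmul φ hr N b)) fun x n => by simp [mul_assoc]))
    (DFunLike.congr_fun (addMonoidHom_ext (f := lmul φ hr N 1) (g := .id _) fun x n => by simp))

end LeftMul

section RightMul

variable {R Q : Type u} [Ring R] [Ring Q] (φ : R →+* Q)
  [Module R Q] (hl : ∀ (r : R) (q : Q), r • q = φ r * q)
  (M : Type u) [AddCommGroup M] [Module Rᵐᵒᵖ M]

def rmul (b : Q) : NCTensor R M Q →+ NCTensor R M Q :=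
  lift (fun m y => m ⊗ₙ[R] (y * b)) (by simp [add_tmul]) (by simp [add_mul, tmul_add])
    (fun r m y => by rw [smul_tmul, hl, hl, mul_assoc])

@[simp]
lemma rmul_tmul (b : Q) (m : M) (y : Q) : rmul φ hl M b (m ⊗ₙ[R] y) = m ⊗ₙ[R] (y * b) :=
  lift_tmul ..

abbrev rightModule : Module Qᵐᵒᵖ (NCTensor R M Q) :=
  letI : SMul Qᵐᵒᵖ (NCTensor R M Q) := ⟨fun b z => rmul φ hl M b.unop z⟩
  Module.ofMinimalAxioms (fun b => map_add (rmul φ hl M b.unop))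
    (fun a b => DFunLike.congr_fun (addMonoidHom_ext (f := rmul φ hl M (a + b).unop)
      (g := rmul φ hl M a.unop + rmul φ hl M b.unop) fun m y => by simp [mul_add, tmul_add]))
    (fun a b => DFunLike.congr_fun (addMonoidHom_ext (f := rmul φ hl M (a * b).unop)
      (g := (rmul φ hl M a.unop).comp (rmul φ hl M b.unop)) fun m y => by simp [mul_assoc]))
    (DFunLike.congr_fun (addMonoidHom_ext (f := rmul φ hl M (1 : Qᵐᵒᵖ).unop) (g := .id _)
      fun m y => by simp))

end RightMul

section RingEpi

variable {R Q : Type u} [Ring R] [Ring Q] (φ : R →+* Q)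
  [Module Rᵐᵒᵖ Q] (hr : ∀ (r : R) (q : Q), op r • q = q * φ r)
  [Module R Q] (hl : ∀ (r : R) (q : Q), r • q = φ r * q)

def mul : NCTensor R Q Q →+ Q :=
  lift (· * ·) (fun _ _ _ => add_mul ..) (fun _ _ _ => mul_add ..)
    (fun r a b => by rw [hr, hl, mul_assoc])

@[simp]
lemma mul_tmul (a b : Q) : mul φ hr hl (a ⊗ₙ[R] b) = a * b :=
  lift_tmul ..

include hr hl in
lemma tmul_one_eq_one_tmul (hepi : IsRingEpi φ) (q : Q) :
    q ⊗ₙ[R] (1 : Q) = (1 : Q) ⊗ₙ[R] q := by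
  let := leftModule φ hr Q
  let := rightModule φ hl Q
  have : SMulCommClass Q Qᵐᵒᵖ (NCTensor R Q Q) := ⟨fun a b => DFunLike.congr_fun
    (addMonoidHom_ext (f := (lmul φ hr Q a).comp (rmul φ hl Q b.unop))
      (g := (rmul φ hl Q b.unop).comp (lmul φ hr Q a)) fun x y => by simp)⟩
  have hsmul (a : Q) (z : NCTensor R Q Q) : a • z = lmul φ hr Q a z := rfl
  have hsmul_op (b : Qᵐᵒᵖ) (z : NCTensor R Q Q) : b • z = rmul φ hl Q b.unop z := rfl
  -- `δ` is a derivation, so `a ↦ (a, δ a)` is a ring map into the square-zero extension.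
  let δ (a : Q) : NCTensor R Q Q := a ⊗ₙ[R] (1 : Q) - (1 : Q) ⊗ₙ[R] a
  let ψ : Q →+* TrivSqZeroExt Q (NCTensor R Q Q) :=
    { toFun a := TrivSqZeroExt.inl a + TrivSqZeroExt.inr (δ a)
      map_one' := by ext <;> simp [δ]
      map_mul' a b := by ext <;> simp [δ, hsmul, hsmul_op, map_sub]
      map_zero' := by ext <;> simp [δ]
      map_add' a b := by
        ext
        · simp
        · simp only [δ, TrivSqZeroExt.snd_add, TrivSqZeroExt.snd_inl, TrivSqZeroExt.snd_inr,
            add_tmul, tmul_add]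
          abel }
  have hψ : ψ.comp φ = (TrivSqZeroExt.inlHom Q _).comp φ := by
    ext r
    · simp [ψ]
    · have h₁ : φ r = op r • (1 : Q) := by rw [hr, one_mul]
      have h₂ : φ r = r • (1 : Q) := by rw [hl, mul_one]
      simp only [ψ, δ, RingHom.coe_comp, RingHom.coe_mk, MonoidHom.coe_mk, OneHom.coe_mk,
        Function.comp_apply, TrivSqZeroExt.snd_add, TrivSqZeroExt.snd_inl, TrivSqZeroExt.snd_inr,
        TrivSqZeroExt.inlHom_apply, zero_add, sub_eq_zero]
      conv_lhs => rw [h₁]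
      rw [smul_tmul, ← h₂]
  simpa [ψ, δ, sub_eq_zero] using congrArg TrivSqZeroExt.snd (RingHom.congr_fun (hepi _ _ _ hψ) q)

include hr hl in
lemma tmul_eq_mul_tmul_one (hepi : IsRingEpi φ) (x y : Q) :
    x ⊗ₙ[R] y = (x * y) ⊗ₙ[R] (1 : Q) := by
  calc x ⊗ₙ[R] y = rmul φ hl Q y (x ⊗ₙ[R] (1 : Q)) := by rw [rmul_tmul, one_mul]
    _ = rmul φ hl Q y ((1 : Q) ⊗ₙ[R] x) := by rw [tmul_one_eq_one_tmul φ hr hl hepi]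
    _ = (x * y) ⊗ₙ[R] (1 : Q) := by rw [rmul_tmul, tmul_one_eq_one_tmul φ hr hl hepi (x * y)]

end RingEpi

end NCTensor

section Kmod

variable {R Q : Type u} [Ring R] [Ring Q] (φ : R →+* Q)
  [Module Rᵐᵒᵖ Q] (hr : ∀ (r : R) (q : Q), op r • q = q * φ r)
  [Module R Q] (hl : ∀ (r : R) (q : Q), r • q = φ r * q)

open NCTensor

def phiLeft : R →ₗ[R] Q where
  toFun := φ
  map_add' := map_add φ
  map_smul' r s := by rw [smul_eq_mul, map_mul, RingHom.id_apply, hl]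

def mkQLeft : letI := KleftModule φ hr; Q →ₗ[R] Kmod φ hr :=
  letI := KleftModule φ hr
  { toFun := Submodule.Quotient.mk
    map_add' _ _ := rfl
    map_smul' r q := by rw [hl]; rfl }

lemma mkQLeft_surjective : Function.Surjective (mkQLeft φ hr hl) :=
  Submodule.Quotient.mk_surjective _

lemma exact_phiLeft_mkQLeft : Function.Exact (phiLeft φ hl) (mkQLeft φ hr hl) := fun _ =>
  (Submodule.Quotient.mk_eq_zero _).trans Iff.rfl

lemma mkQLeft_one : mkQLeft φ hr hl 1 = 0 :=
  (exact_phiLeft_mkQLeft φ hr hl 1).mpr ⟨1, map_one φ⟩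

include hl in
lemma tensor_Kmod_eq_zero (hepi : IsRingEpi φ) :
    letI := KleftModule φ hr; ∀ z : NCTensor R Q (Kmod φ hr), z = 0 := by
  let := KleftModule φ hr
  intro z
  induction z using induction_on with
  | zero => rfl
  | add y z hy hz => rw [hy, hz, add_zero]
  | tmul x k =>
    obtain ⟨y, rfl⟩ := mkQLeft_surjective φ hr hl k
    rw [← lTensor_tmul, tmul_eq_mul_tmul_one φ hr hl hepi, lTensor_tmul, mkQLeft_one, tmul_zero]

variable {A B : Type u} [AddCommGroup A] [AddCommGroup B] [Module Rᵐᵒᵖ A] [Module Rᵐᵒᵖ B]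
  {i : A →ₗ[Rᵐᵒᵖ] B} {p : B →ₗ[Rᵐᵒᵖ] Q}

include hl in
/-- `Tor_1^R(Q, K) = 0`, read off the long exact sequence of `0 → R → Q → K → 0`. -/
lemma injective_rTensor_Kmod (htor : Tor1Zero R Q Q) (hB : Module.Projective Rᵐᵒᵖ B)
    (hi : Function.Injective i) (hp : Function.Surjective p) (hip : Function.Exact i p) :
    letI := KleftModule φ hr; Function.Injective (rTensor (Kmod φ hr) i) := by
  let := KleftModule φ hr
  have hQ : Function.Injective (rTensor Q i) :=
    htor A B i p hB hi hp (LinearMap.exact_iff.mp hip).symm _ fun _ _ => rTensor_tmul ..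
  refine (injective_iff_map_eq_zero _).mpr fun t ht => ?_
  obtain ⟨y, rfl⟩ := lTensor_surjective A (mkQLeft_surjective φ hr hl) t
  obtain ⟨w, hw⟩ := (lTensor_exact B (exact_phiLeft_mkQLeft φ hr hl) (mkQLeft_surjective φ hr hl)
    (rTensor Q i y)).mp (by rw [← rTensor_lTensor, ht])
  obtain ⟨b, rfl⟩ := exists_eq_tmul_one w
  rw [lTensor_tmul] at hw
  have hb : p b = 0 := by
    have := congrArg (mul φ hr hl ∘ rTensor Q p) hw
    simpa [(rTensor_exact Q hip hp).apply_apply_eq_zero, phiLeft] using this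
  obtain ⟨a, rfl⟩ := (hip b).mp hb
  have hy : y = a ⊗ₙ[R] (1 : Q) := hQ (by rw [← hw, rTensor_tmul]; simp [phiLeft])
  rw [hy, lTensor_tmul, mkQLeft_one, tmul_zero]

include hl in
lemma bijective_rTensor_Kmod (hepi : IsRingEpi φ) (htor : Tor1Zero R Q Q)
    (hB : Module.Projective Rᵐᵒᵖ B) (hi : Function.Injective i) (hp : Function.Surjective p)
    (hip : Function.Exact i p) :
    letI := KleftModule φ hr; Function.Bijective (rTensor (Kmod φ hr) i) := by
  let := KleftModule φ hr
  refine ⟨injective_rTensor_Kmod φ hr hl htor hB hi hp hip, fun z => ?_⟩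
  exact (rTensor_exact (Kmod φ hr) hip hp z).mp (tensor_Kmod_eq_zero φ hr hl hepi _)

end Kmod

section HomKmod

variable {R Q : Type u} [Ring R] [Ring Q] (φ : R →+* Q)
  [Module Rᵐᵒᵖ Q] (hr : ∀ (r : R) (q : Q), op r • q = q * φ r)
  (M : Type u) [AddCommGroup M] [Module Rᵐᵒᵖ M]

open NCTensor

lemma smulCommClass_Kmod : letI := KleftModule φ hr; SMulCommClass Rᵐᵒᵖ R (Kmod φ hr) :=
  letI := KleftModule φ hr
  ⟨fun c r k => ((lK φ hr r).map_smul c k).symm⟩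

variable {A : Type u} [AddCommGroup A] [Module Rᵐᵒᵖ A]

def homKmodUncurry (f : letI := homModule φ hr M; A →ₗ[Rᵐᵒᵖ] (Kmod φ hr →ₗ[Rᵐᵒᵖ] M)) :
    letI := KleftModule φ hr; NCTensor R A (Kmod φ hr) →+ M :=
  letI := KleftModule φ hr
  letI := homModule φ hr M
  lift (fun a k => f a k) (by simp) (by simp) (fun r a k => by rw [map_smul]; rfl)

@[simp]
lemma homKmodUncurry_tmul (f : letI := homModule φ hr M; A →ₗ[Rᵐᵒᵖ] (Kmod φ hr →ₗ[Rᵐᵒᵖ] M))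
    (a : A) (k : Kmod φ hr) :
    letI := KleftModule φ hr; homKmodUncurry φ hr M f (a ⊗ₙ[R] k) = f a k :=
  letI := KleftModule φ hr
  lift_tmul ..

lemma eq_zero_of_linearMap_homKmod [Module R Q] (hl : ∀ (r : R) (q : Q), r • q = φ r * q)
    (hepi : IsRingEpi φ) :
    letI := homModule φ hr M; ∀ g : Q →ₗ[Rᵐᵒᵖ] (Kmod φ hr →ₗ[Rᵐᵒᵖ] M), g = 0 := by
  let := KleftModule φ hr
  let := homModule φ hr M
  intro g
  refine LinearMap.ext fun q => LinearMap.ext fun k => ?_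
  rw [← homKmodUncurry_tmul, tensor_Kmod_eq_zero φ hr hl hepi (q ⊗ₙ[R] k), map_zero]
  rfl

/-- Extend through the adjunction `Hom_R(A, Hom_R(K, M)) ≅ Hom(A ⊗_R K, M)`. -/
lemma exists_comp_eq_of_bijective_rTensor {B : Type u} [AddCommGroup B] [Module Rᵐᵒᵖ B]
    (i : A →ₗ[Rᵐᵒᵖ] B)
    (hi : letI := KleftModule φ hr; Function.Bijective (rTensor (Kmod φ hr) i)) :
    letI := homModule φ hr M
    ∀ f : A →ₗ[Rᵐᵒᵖ] (Kmod φ hr →ₗ[Rᵐᵒᵖ] M), ∃ g : B →ₗ[Rᵐᵒᵖ] (Kmod φ hr →ₗ[Rᵐᵒᵖ] M),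
      g ∘ₗ i = f := by
  let := KleftModule φ hr
  let := homModule φ hr M
  have := smulCommClass_Kmod φ hr
  intro f
  let F := homKmodUncurry φ hr M f
  let e := AddEquiv.ofBijective (rTensor (Kmod φ hr) i) hi
  let G : NCTensor R B (Kmod φ hr) →+ M := F.comp e.symm.toAddMonoidHom
  have hF (c : Rᵐᵒᵖ) (z : NCTensor R A (Kmod φ hr)) :
      F (lTensor A (DistribSMul.toLinearMap R _ c) z) = c • F z :=
    DFunLike.congr_fun (addMonoidHom_ext (f := F.comp (lTensor A (DistribSMul.toLinearMap R _ c)))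
      (g := (DistribSMul.toAddMonoidHom M c).comp F) fun a k => by simp [F]) z
  have hG (c : Rᵐᵒᵖ) (z : NCTensor R B (Kmod φ hr)) :
      G (lTensor B (DistribSMul.toLinearMap R _ c) z) = c • G z := by
    obtain ⟨z, rfl⟩ := e.surjective z
    have hcomm : lTensor B (DistribSMul.toLinearMap R _ c) (e z) =
        e (lTensor A (DistribSMul.toLinearMap R _ c) z) :=
      (rTensor_lTensor i _ z).symm
    simp only [G, AddMonoidHom.comp_apply, AddEquiv.coe_toAddMonoidHom, hcomm,
      e.symm_apply_apply, hF]
  refine ⟨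
    { toFun b :=
        { toFun k := G (b ⊗ₙ[R] k)
          map_add' k k' := by rw [tmul_add, map_add]
          map_smul' c k := by simpa using hG c (b ⊗ₙ[R] k) }
      map_add' b b' := LinearMap.ext fun k => by simp [add_tmul]
      map_smul' c b := LinearMap.ext fun k => by
        change G ((c • b) ⊗ₙ[R] k) = G (b ⊗ₙ[R] (c.unop • k))
        rw [← smul_tmul, op_unop] }, ?_⟩
  refine LinearMap.ext fun a => LinearMap.ext fun k => ?_
  have hik : i a ⊗ₙ[R] k = e (a ⊗ₙ[R] k) := (rTensor_tmul i a k).symm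
  simp [G, hik, F]

end HomKmod

section Ext

open CategoryTheory

lemma exists_comp_eq_of_exact {S : Type*} [Ring S] {P₂ P₁ P₀ X N : Type*} [AddCommGroup P₂]
    [AddCommGroup P₁] [AddCommGroup P₀] [AddCommGroup X] [AddCommGroup N] [Module S P₂]
    [Module S P₁] [Module S P₀] [Module S X] [Module S N] {d₂ : P₂ →ₗ[S] P₁}
    {d₁ : P₁ →ₗ[S] P₀} {p : P₀ →ₗ[S] X} (hd₂d₁ : Function.Exact d₂ d₁)
    (hd₁p : Function.Exact d₁ p)
    (hext : ∀ f : LinearMap.ker p →ₗ[S] N, ∃ g : P₀ →ₗ[S] N, g ∘ₗ (LinearMap.ker p).subtype = f)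
    (f : P₁ →ₗ[S] N) (hf : f ∘ₗ d₂ = 0) : ∃ g : P₀ →ₗ[S] N, g ∘ₗ d₁ = f := by
  let A := LinearMap.ker p
  let d₁' : P₁ →ₗ[S] A := d₁.codRestrict A fun y => (hd₁p _).mpr ⟨y, rfl⟩
  have hd₁' : Function.Surjective d₁' := fun ⟨x, hx⟩ =>
    let ⟨y, hy⟩ := (hd₁p x).mp hx; ⟨y, Subtype.ext hy⟩
  have hd₂d₁' : Function.Exact d₂ d₁' := fun x => by
    rw [← hd₂d₁ x, ← Submodule.coe_eq_zero]
    rfl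
  have hf' : LinearMap.range d₂ ≤ LinearMap.ker f := by
    rintro _ ⟨x, rfl⟩
    exact LinearMap.congr_fun hf x
  obtain ⟨g, hg⟩ := hext ((LinearMap.range d₂).liftQ f hf' ∘ₗ
    (hd₂d₁'.linearEquivOfSurjective hd₁').symm.toLinearMap)
  refine ⟨g, LinearMap.ext fun x => ?_⟩
  change g (A.subtype (d₁' x)) = f x
  rw [← LinearMap.comp_apply g, hg]
  simp

lemma subsingleton_extGroup_one {S : Type u} [Ring S] (X N : Type u) [AddCommGroup X]
    [Module S X] [AddCommGroup N] [Module S N]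
    (hN : ∀ (A B : Type u) [AddCommGroup A] [AddCommGroup B] [Module S A] [Module S B]
      (i : A →ₗ[S] B) (p : B →ₗ[S] X), Module.Projective S B → Function.Injective i →
      Function.Surjective p → Function.Exact i p →
      ∀ f : A →ₗ[S] N, ∃ g : B →ₗ[S] N, g ∘ₗ i = f) :
    Subsingleton (extGroup S 1 X N) := by
  let P : ProjectiveResolution (ModuleCat.of S X) := HasProjectiveResolution.out.some
  let ε := HomologicalComplex.singleObjXSelf (ComplexShape.down ℕ) 0 (ModuleCat.of S X)
  let p : P.complex.X 0 →ₗ[S] X := ε.hom.hom ∘ₗ (P.π.f 0).hom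
  have hp : Function.Surjective p :=
    (ModuleCat.epi_iff_surjective (P.π.f 0 ≫ ε.hom)).mp (epi_comp _ _)
  have hε : Function.Injective ε.hom.hom := (ModuleCat.mono_iff_injective _).mp inferInstance
  have hd₁p : Function.Exact (P.complex.d 1 0).hom p :=
    hε.comp_exact_iff_exact.mpr (LinearMap.exact_iff.mpr P.exact₀.moduleCat_range_eq_ker.symm)
  have hd₂d₁ : Function.Exact (P.complex.d 2 1).hom (P.complex.d 1 0).hom :=
    LinearMap.exact_iff.mpr (P.exact_succ 0).moduleCat_range_eq_ker.symm
  have hexact : (P.complex.linearYonedaObj ℤ (ModuleCat.of S N)).ExactAt 1 := by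
    rw [HomologicalComplex.exactAt_iff' _ 0 1 2 (by simp) (by simp),
      ShortComplex.moduleCat_exact_iff]
    intro (f : P.complex.X 1 ⟶ ModuleCat.of S N) (hf : P.complex.d 2 1 ≫ f = 0)
    obtain ⟨g, hg⟩ := exists_comp_eq_of_exact hd₂d₁ hd₁p
      (hN _ _ _ p inferInstance (Submodule.injective_subtype _) hp
        (LinearMap.exact_subtype_ker_map p)) f.hom (congrArg ModuleCat.Hom.hom hf)
    exact ⟨ModuleCat.ofHom g, ModuleCat.hom_ext hg⟩
  exact ModuleCat.subsingleton_of_isZero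
    (((HomologicalComplex.exactAt_iff_isZero_homology _ _).mp hexact).of_iso (P.isoExt 1 _))

end Ext

theorem homK_matlisCotorsion_hreduced_general {R Q : Type u} [Ring R] [Ring Q] (φ : R →+* Q)
    (hepi : IsRingEpi φ)
    [Module Rᵐᵒᵖ Q] (hr : ∀ (r : R) (q : Q), op r • q = q * φ r)
    [Module R Q] (hl : ∀ (r : R) (q : Q), r • q = φ r * q)
    (htor : Tor1Zero R Q Q)
    (M : Type u) [AddCommGroup M] [Module Rᵐᵒᵖ M] :
    letI : Module Rᵐᵒᵖ (Kmod φ hr →ₗ[Rᵐᵒᵖ] M) := homModule φ hr M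
    Subsingleton (extGroup Rᵐᵒᵖ 1 Q (Kmod φ hr →ₗ[Rᵐᵒᵖ] M)) ∧
      (∀ g : Q →ₗ[Rᵐᵒᵖ] (Kmod φ hr →ₗ[Rᵐᵒᵖ] M), g = 0) := by
  let := homModule φ hr M
  refine ⟨subsingleton_extGroup_one Q _ fun A B _ _ _ _ i p hB hi hp hip => ?_,
    eq_zero_of_linearMap_homKmod φ hr M hl hepi⟩
  exact exists_comp_eq_of_bijective_rTensor φ hr M i
    (bijective_rTensor_Kmod φ hr hl hepi htor hB hi hp hip)

/-- If `φ : R → Q` is an injective ring epimorphism with `Tor_1^R(Q,Q) = 0` and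
`K = Q/φ(R)`, then for every right `R`-module `M` the right `R`-module `Hom_R(K, M)`
is Matlis-cotorsion and h-reduced. -/
theorem homK_matlisCotorsion_hreduced {R Q : Type u} [Ring R] [Ring Q] (φ : R →+* Q)
    (hinj : Function.Injective φ) (hepi : IsRingEpi φ)
    [Module Rᵐᵒᵖ Q] (hr : ∀ (r : R) (q : Q), op r • q = q * φ r)
    [Module R Q] (hl : ∀ (r : R) (q : Q), r • q = φ r * q)
    (htor : Tor1Zero R Q Q)
    (M : Type u) [AddCommGroup M] [Module Rᵐᵒᵖ M] :
    letI : Module Rᵐᵒᵖ (Kmod φ hr →ₗ[Rᵐᵒᵖ] M) := homModule φ hr M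
    Subsingleton (extGroup Rᵐᵒᵖ 1 Q (Kmod φ hr →ₗ[Rᵐᵒᵖ] M)) ∧
      (∀ g : Q →ₗ[Rᵐᵒᵖ] (Kmod φ hr →ₗ[Rᵐᵒᵖ] M), g = 0) :=
  homK_matlisCotorsion_hreduced_general φ hepi hr hl htor M
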